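/- For every integer k ≥ 1 and all real numbers a ≤ b, ∫_a^b |err(x)|^k dx ≤ (ε^k/(k+1)) · ∫_a^b |x|^k dx + (2/(k+1)) · (|a|^{k+1} + |b|^{k+1}) · (ε/(1−ε))^{k+1}. -/

import Mathlib

/-!
Write `d x` for the distance from `x` to `F`; by the nearest-rounding hypothesis `|err x| = d x`.
On a gap `(z, z')` of `F`, `d` is a tent of height `h = (z' - z) / 2`, so `∫ d ^ k` over the gap is
`2 h ^ (k + 1) / (k + 1)`, and the error bound at the midpoint `m` reads `h ≤ ε |m|`. For a gap
inside `[a, b]`, Jensen's inequality (`|m| ^ k` is at most the mean of `|x| ^ k` over the gap)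
turns this into `ε ^ k / (k + 1) ∫ |x| ^ k` over the gap, and summing over the countably many gaps
gives the first term. The gaps containing `a` or `b` are bounded crudely: for an endpoint `c` in the
gap, `|m| ≤ |c| + h ≤ |c| + ε |m|`, hence `h ≤ ε / (1 - ε) |c|`.
-/

open MeasureTheory Set Metric

noncomputable def flF (F : Set ℝ) (x : ℝ) : ℝ := sSup (F ∩ Set.Iic x)

noncomputable def ceF (F : Set ℝ) (x : ℝ) : ℝ := sInf (F ∩ Set.Ici x)

lemma setIntegral_sUnion_le {α : Type*} [MeasurableSpace α] {μ : Measure α} {f g : α → ℝ}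
    {𝒢 : Set (Set α)} (hc : 𝒢.Countable) (hm : ∀ s ∈ 𝒢, MeasurableSet s)
    (hd : 𝒢.PairwiseDisjoint id) (hf : IntegrableOn f (⋃₀ 𝒢) μ) (hg : IntegrableOn g (⋃₀ 𝒢) μ)
    (hfg : ∀ s ∈ 𝒢, ∫ x in s, f x ∂μ ≤ ∫ x in s, g x ∂μ) :
    ∫ x in ⋃₀ 𝒢, f x ∂μ ≤ ∫ x in ⋃₀ 𝒢, g x ∂μ := by
  have := hc.to_subtype
  rw [sUnion_eq_iUnion] at hf hg ⊢
  exact hasSum_le (fun s : 𝒢 => hfg s s.2)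
    (hasSum_integral_iUnion (fun s : 𝒢 => hm s s.2) (hd.subtype _ _) hf)
    (hasSum_integral_iUnion (fun s : 𝒢 => hm s s.2) (hd.subtype _ _) hg)

section FloorCeil

variable {F : Set ℝ} {x y z z' : ℝ}

lemma flF_mem (hF : IsClosed F) (h : (F ∩ Iic x).Nonempty) : flF F x ∈ F ∩ Iic x :=
  (hF.inter isClosed_Iic).csSup_mem h ⟨x, fun _ hy => hy.2⟩

lemma ceF_mem (hF : IsClosed F) (h : (F ∩ Ici x).Nonempty) : ceF F x ∈ F ∩ Ici x :=
  (hF.inter isClosed_Ici).csInf_mem h ⟨x, fun _ hy => hy.2⟩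

lemma le_flF (hy : y ∈ F) (hyx : y ≤ x) : y ≤ flF F x :=
  le_csSup ⟨x, fun _ hw => hw.2⟩ ⟨hy, hyx⟩

lemma ceF_le (hy : y ∈ F) (hxy : x ≤ y) : ceF F x ≤ y :=
  csInf_le ⟨x, fun _ hw => hw.2⟩ ⟨hy, hxy⟩

lemma disjoint_Ioo_flF_ceF : Disjoint (Ioo (flF F x) (ceF F x)) F := by
  refine disjoint_left.2 fun y hy hyF => ?_
  rcases le_total y x with hyx | hxy
  · exact (le_flF hyF hyx).not_gt hy.1
  · exact (ceF_le hyF hxy).not_gt hy.2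

lemma flF_eq_of_mem_Ioo (hz : z ∈ F) (hgap : Disjoint (Ioo z z') F) (hy : y ∈ Ioo z z') :
    flF F y = z := by
  refine le_antisymm (csSup_le ⟨z, hz, hy.1.le⟩ fun w hw => ?_) (le_flF hz hy.1.le)
  by_contra! hzw
  exact hgap.notMem_of_mem_left ⟨hzw, hw.2.trans_lt hy.2⟩ hw.1

lemma ceF_eq_of_mem_Ioo (hz' : z' ∈ F) (hgap : Disjoint (Ioo z z') F) (hy : y ∈ Ioo z z') :
    ceF F y = z' := by
  refine le_antisymm (ceF_le hz' hy.2.le) (le_csInf ⟨z', hz', hy.2.le⟩ fun w hw => ?_)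
  by_contra! hwz'
  exact hgap.notMem_of_mem_left ⟨hy.1.trans_le hw.2, hwz'⟩ hw.1

end FloorCeil

-- `z = z'` is allowed, so that `flF F x` and `ceF F x` bound a gap also when `x ∈ F`.
def IsGap (F : Set ℝ) (z z' : ℝ) : Prop := z ∈ F ∧ z' ∈ F ∧ z ≤ z' ∧ Disjoint (Ioo z z') F

section Gaps

variable {F : Set ℝ} {x z z' : ℝ}

lemma isGap_flF_ceF (hF : IsClosed F) (hbelow : (F ∩ Iic x).Nonempty)
    (habove : (F ∩ Ici x).Nonempty) : IsGap F (flF F x) (ceF F x) :=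
  ⟨(flF_mem hF hbelow).1, (ceF_mem hF habove).1, (flF_mem hF hbelow).2.trans (ceF_mem hF habove).2,
    disjoint_Ioo_flF_ceF⟩

lemma mem_Ioo_flF_ceF (hF : IsClosed F) (hbelow : (F ∩ Iic x).Nonempty)
    (habove : (F ∩ Ici x).Nonempty) (hx : x ∉ F) : x ∈ Ioo (flF F x) (ceF F x) :=
  ⟨(flF_mem hF hbelow).2.lt_of_ne (ne_of_mem_of_not_mem (flF_mem hF hbelow).1 hx),
    (ceF_mem hF habove).2.lt_of_ne' (ne_of_mem_of_not_mem (ceF_mem hF habove).1 hx)⟩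

lemma IsGap.eq_of_mem {z₁ z₁' z₂ z₂' w : ℝ} (h₁ : IsGap F z₁ z₁') (h₂ : IsGap F z₂ z₂')
    (hw₁ : w ∈ Ioo z₁ z₁') (hw₂ : w ∈ Ioo z₂ z₂') : z₁ = z₂ ∧ z₁' = z₂' :=
  ⟨(flF_eq_of_mem_Ioo h₁.1 h₁.2.2.2 hw₁).symm.trans (flF_eq_of_mem_Ioo h₂.1 h₂.2.2.2 hw₂),
    (ceF_eq_of_mem_Ioo h₁.2.1 h₁.2.2.2 hw₁).symm.trans (ceF_eq_of_mem_Ioo h₂.2.1 h₂.2.2.2 hw₂)⟩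

lemma IsGap.infDist_eq (h : IsGap F z z') (hx : x ∈ Icc z z') :
    infDist x F = min (x - z) (z' - x) := by
  obtain ⟨hz, hz', -, hgap⟩ := h
  refine le_antisymm (le_min ?_ ?_) ((le_infDist ⟨z, hz⟩).2 fun y hy => ?_)
  · simpa [Real.dist_eq, abs_of_nonneg (sub_nonneg.2 hx.1)]
      using infDist_le_dist_of_mem hz (x := x)
  · simpa [Real.dist_eq, abs_of_nonpos (sub_nonpos.2 hx.2)]
      using infDist_le_dist_of_mem hz' (x := x)
  rw [Real.dist_eq]
  by_cases hyz : y ≤ z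
  · exact (min_le_left _ _).trans ((sub_le_sub_left hyz x).trans (le_abs_self _))
  · have hz'y : z' ≤ y := not_lt.1 fun hyz' => hgap.notMem_of_mem_left ⟨not_le.1 hyz, hyz'⟩ hy
    exact (min_le_right _ _).trans
      ((sub_le_sub_right hz'y x).trans (abs_sub_comm x y ▸ le_abs_self _))

end Gaps

section Calculus

variable {z z' : ℝ}

lemma integral_min_sub_pow (h : z ≤ z') (k : ℕ) :
    ∫ x in z..z', min (x - z) (z' - x) ^ k = 2 * ((z' - z) / 2) ^ (k + 1) / (k + 1) := by
  have hcont : Continuous fun x => min (x - z) (z' - x) ^ k := by fun_prop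
  rw [← intervalIntegral.integral_add_adjacent_intervals (b := (z + z') / 2)
    (hcont.intervalIntegrable _ _) (hcont.intervalIntegrable _ _)]
  have hleft : ∫ x in z..(z + z') / 2, min (x - z) (z' - x) ^ k
      = ∫ x in z..(z + z') / 2, (x - z) ^ k :=
    intervalIntegral.integral_congr fun x hx => by
      rw [uIcc_of_le (by linarith)] at hx
      simp only [min_eq_left (show x - z ≤ z' - x by linarith [hx.2])]
  have hright : ∫ x in (z + z') / 2..z', min (x - z) (z' - x) ^ k
      = ∫ x in (z + z') / 2..z', (z' - x) ^ k :=
    intervalIntegral.integral_congr fun x hx => by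
      rw [uIcc_of_le (by linarith)] at hx
      simp only [min_eq_right (show z' - x ≤ x - z by linarith [hx.1])]
  rw [hleft, hright, intervalIntegral.integral_comp_sub_right (fun x => x ^ k),
    intervalIntegral.integral_comp_sub_left (fun x => x ^ k), integral_pow, integral_pow,
    show (z + z') / 2 - z = (z' - z) / 2 by ring, show z' - (z + z') / 2 = (z' - z) / 2 by ring]
  simp only [sub_self, zero_pow k.succ_ne_zero]
  ring

lemma abs_midpoint_pow_le (k : ℕ) (x : ℝ) :
    |(z + z') / 2| ^ k ≤ (|x| ^ k + |z + z' - x| ^ k) / 2 := by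
  have htri : |(z + z') / 2| ≤ (|x| + |z + z' - x|) / 2 := by
    rw [abs_div, abs_two]
    have := abs_add_le x (z + z' - x)
    rw [add_sub_cancel] at this
    linarith
  have hconv := (convexOn_pow k).2 (mem_Ici.2 (abs_nonneg x)) (mem_Ici.2 (abs_nonneg (z + z' - x)))
    (by norm_num : (0 : ℝ) ≤ 1 / 2) (by norm_num : (0 : ℝ) ≤ 1 / 2) (by norm_num)
  simp only [smul_eq_mul] at hconv
  calc |(z + z') / 2| ^ k ≤ ((|x| + |z + z' - x|) / 2) ^ k := by gcongr
    _ = (1 / 2 * |x| + 1 / 2 * |z + z' - x|) ^ k := by ring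
    _ ≤ (|x| ^ k + |z + z' - x| ^ k) / 2 := by linarith

lemma sub_mul_abs_midpoint_pow_le_integral (h : z ≤ z') (k : ℕ) :
    (z' - z) * |(z + z') / 2| ^ k ≤ ∫ x in z..z', |x| ^ k := by
  have hreflect : ∫ x in z..z', |z + z' - x| ^ k = ∫ x in z..z', |x| ^ k := by
    simpa using
      intervalIntegral.integral_comp_sub_left (a := z) (b := z') (fun x => |x| ^ k) (z + z')
  have hint : IntervalIntegrable (fun x => |x| ^ k) volume z z' :=
    (by fun_prop : Continuous fun x : ℝ => |x| ^ k).intervalIntegrable _ _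
  have hint' : IntervalIntegrable (fun x => |z + z' - x| ^ k) volume z z' :=
    (by fun_prop : Continuous fun x : ℝ => |z + z' - x| ^ k).intervalIntegrable _ _
  calc (z' - z) * |(z + z') / 2| ^ k = ∫ _ in z..z', |(z + z') / 2| ^ k := by simp
    _ ≤ ∫ x in z..z', (|x| ^ k + |z + z' - x| ^ k) / 2 :=
        intervalIntegral.integral_mono_on h intervalIntegrable_const
          ((hint.add hint').div_const 2)
          fun x _ => abs_midpoint_pow_le k x
    _ = ∫ x in z..z', |x| ^ k := by
        rw [intervalIntegral.integral_div, intervalIntegral.integral_add hint hint', hreflect]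
        ring

end Calculus

section GapBounds

variable {F : Set ℝ} {ε z z' : ℝ}

lemma IsGap.integral_infDist_pow (h : IsGap F z z') (k : ℕ) :
    ∫ x in z..z', infDist x F ^ k = 2 * ((z' - z) / 2) ^ (k + 1) / (k + 1) := by
  rw [← integral_min_sub_pow h.2.2.1 k]
  refine intervalIntegral.integral_congr fun x hx => ?_
  rw [uIcc_of_le h.2.2.1] at hx
  simp only [h.infDist_eq hx]

lemma IsGap.half_sub_le (h : IsGap F z z') (hbound : ∀ x, infDist x F ≤ ε * |x|) :
    (z' - z) / 2 ≤ ε * |(z + z') / 2| := by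
  have hmid := hbound ((z + z') / 2)
  rwa [h.infDist_eq ⟨by linarith [h.2.2.1], by linarith [h.2.2.1]⟩,
    show (z + z') / 2 - z = (z' - z) / 2 by ring, show z' - (z + z') / 2 = (z' - z) / 2 by ring,
    min_self] at hmid

lemma IsGap.integral_infDist_pow_le_integral (h : IsGap F z z') (hε0 : 0 ≤ ε)
    (hbound : ∀ x, infDist x F ≤ ε * |x|) (k : ℕ) :
    ∫ x in z..z', infDist x F ^ k ≤ ε ^ k / (k + 1) * ∫ x in z..z', |x| ^ k := by
  have hzz' := h.2.2.1
  have hw := h.half_sub_le hbound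
  have hscaled : 2 * ((z' - z) / 2) ^ (k + 1) ≤ ε ^ k * ∫ x in z..z', |x| ^ k :=
    calc 2 * ((z' - z) / 2) ^ (k + 1) = (z' - z) * ((z' - z) / 2) ^ k := by ring
      _ ≤ (z' - z) * (ε * |(z + z') / 2|) ^ k := by gcongr
      _ = ε ^ k * ((z' - z) * |(z + z') / 2| ^ k) := by ring
      _ ≤ ε ^ k * ∫ x in z..z', |x| ^ k := by
          gcongr; exact sub_mul_abs_midpoint_pow_le_integral hzz' k
  rw [h.integral_infDist_pow, div_mul_eq_mul_div]
  gcongr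

lemma IsGap.integral_infDist_pow_le_of_mem (h : IsGap F z z') (hε0 : 0 ≤ ε) (hε1 : ε < 1)
    (hbound : ∀ x, infDist x F ≤ ε * |x|) {c : ℝ} (hc : c ∈ Icc z z') (k : ℕ) :
    ∫ x in z..z', infDist x F ^ k ≤ 2 / (k + 1) * |c| ^ (k + 1) * (ε / (1 - ε)) ^ (k + 1) := by
  have hw := h.half_sub_le hbound
  have hdist : |(z + z') / 2 - c| ≤ (z' - z) / 2 :=
    abs_le.2 ⟨by linarith [hc.2], by linarith [hc.1]⟩
  have hmid : (1 - ε) * |(z + z') / 2| ≤ |c| := by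
    linarith [abs_sub_abs_le_abs_sub ((z + z') / 2) c]
  have hhalf : (z' - z) / 2 ≤ |c| * (ε / (1 - ε)) := by
    rw [mul_div_assoc', le_div_iff₀ (by linarith)]
    nlinarith
  have : 0 ≤ (z' - z) / 2 := by linarith [h.2.2.1]
  calc ∫ x in z..z', infDist x F ^ k = 2 / (k + 1) * ((z' - z) / 2) ^ (k + 1) := by
        rw [h.integral_infDist_pow]; ring
    _ ≤ 2 / (k + 1) * (|c| * (ε / (1 - ε))) ^ (k + 1) := by gcongr
    _ = 2 / (k + 1) * |c| ^ (k + 1) * (ε / (1 - ε)) ^ (k + 1) := by rw [mul_pow]; ring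

end GapBounds

def gapsIn (F : Set ℝ) (a b : ℝ) : Set (Set ℝ) :=
  {s | ∃ z z', IsGap F z z' ∧ z < z' ∧ a ≤ z ∧ z' ≤ b ∧ s = Ioo z z'}

section Decomposition

variable {F : Set ℝ} {a b : ℝ}

lemma Ioo_sdiff_eq_sUnion_gapsIn (hF : IsClosed F) (ha : a ∈ F) (hb : b ∈ F) :
    Ioo a b \ F = ⋃₀ gapsIn F a b := by
  ext x
  constructor
  · rintro ⟨hx, hxF⟩
    have hbelow : (F ∩ Iic x).Nonempty := ⟨a, ha, hx.1.le⟩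
    have habove : (F ∩ Ici x).Nonempty := ⟨b, hb, hx.2.le⟩
    have hxgap := mem_Ioo_flF_ceF hF hbelow habove hxF
    exact ⟨_, ⟨_, _, isGap_flF_ceF hF hbelow habove, hxgap.1.trans hxgap.2,
      le_flF ha hx.1.le, ceF_le hb hx.2.le, rfl⟩, hxgap⟩
  · rintro ⟨_, ⟨z, z', hgap, -, haz, hz'b, rfl⟩, hx⟩
    exact ⟨⟨haz.trans_lt hx.1, hx.2.trans_le hz'b⟩, hgap.2.2.2.notMem_of_mem_left hx⟩

lemma pairwiseDisjoint_gapsIn : (gapsIn F a b).PairwiseDisjoint id := by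
  rintro _ ⟨z₁, z₁', h₁, -, -, -, rfl⟩ _ ⟨z₂, z₂', h₂, -, -, -, rfl⟩ hne
  refine disjoint_left.2 fun w hw₁ hw₂ => hne ?_
  obtain ⟨rfl, rfl⟩ := h₁.eq_of_mem h₂ hw₁ hw₂
  rfl

lemma countable_gapsIn : (gapsIn F a b).Countable :=
  pairwiseDisjoint_gapsIn.countable_of_isOpen (fun _ ⟨_, _, _, _, _, _, hs⟩ => hs ▸ isOpen_Ioo)
    fun _ ⟨_, _, _, hzz', _, _, hs⟩ => hs ▸ nonempty_Ioo.2 hzz'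

lemma intervalIntegral_le_of_isGap (hF : IsClosed F) (ha : a ∈ F) (hb : b ∈ F) (hab : a ≤ b)
    {f g : ℝ → ℝ} (hf : IntervalIntegrable f volume a b) (hg : IntervalIntegrable g volume a b)
    (hfgF : ∀ x ∈ F, f x ≤ g x)
    (hfg : ∀ z z', IsGap F z z' → a ≤ z → z' ≤ b → ∫ x in z..z', f x ≤ ∫ x in z..z', g x) :
    ∫ x in a..b, f x ≤ ∫ x in a..b, g x := by
  rw [intervalIntegrable_iff_integrableOn_Ioo_of_le hab] at hf hg
  simp only [intervalIntegral.integral_of_le hab, integral_Ioc_eq_integral_Ioo]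
  rw [← integral_inter_add_sdiff hF.measurableSet hf,
    ← integral_inter_add_sdiff hF.measurableSet hg]
  refine add_le_add (setIntegral_mono_on (hf.mono_set inter_subset_left)
    (hg.mono_set inter_subset_left) (measurableSet_Ioo.inter hF.measurableSet)
    fun x hx => hfgF x hx.2) ?_
  have hcover := Ioo_sdiff_eq_sUnion_gapsIn hF ha hb
  have hsub : ⋃₀ gapsIn F a b ⊆ Ioo a b := hcover ▸ sdiff_subset
  rw [hcover]
  refine setIntegral_sUnion_le countable_gapsIn
    (fun _ ⟨_, _, _, _, _, _, hs⟩ => hs ▸ measurableSet_Ioo) pairwiseDisjoint_gapsIn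
    (hf.mono_set hsub) (hg.mono_set hsub) ?_
  rintro _ ⟨z, z', hgap, -, haz, hz'b, rfl⟩
  simpa only [intervalIntegral.integral_of_le hgap.2.2.1, integral_Ioc_eq_integral_Ioo]
    using hfg z z' hgap haz hz'b

end Decomposition

section DistancePower

variable {F : Set ℝ} {ε a b : ℝ} {k : ℕ}

lemma intervalIntegrable_infDist_pow (F : Set ℝ) (k : ℕ) (a b : ℝ) :
    IntervalIntegrable (fun x => infDist x F ^ k) volume a b :=
  ((continuous_infDist_pt F).pow k).intervalIntegrable a b

lemma integral_infDist_pow_le_of_mem (hF : IsClosed F) (hε0 : 0 ≤ ε)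
    (hbound : ∀ x, infDist x F ≤ ε * |x|) (hk : 1 ≤ k) (ha : a ∈ F) (hb : b ∈ F) (hab : a ≤ b) :
    ∫ x in a..b, infDist x F ^ k ≤ ε ^ k / (k + 1) * ∫ x in a..b, |x| ^ k := by
  rw [← intervalIntegral.integral_const_mul]
  refine intervalIntegral_le_of_isGap hF ha hb hab (intervalIntegrable_infDist_pow F k a b)
    ((by fun_prop : Continuous fun x : ℝ => ε ^ k / (k + 1) * |x| ^ k).intervalIntegrable _ _)
    (fun x hx => ?_) fun z z' hgap _ _ => ?_
  · rw [infDist_zero_of_mem hx, zero_pow (by omega)]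
    positivity
  · rw [intervalIntegral.integral_const_mul]
    exact hgap.integral_infDist_pow_le_integral hε0 hbound k

lemma integral_infDist_pow_le_of_mem_Icc_flF_ceF (hF : IsClosed F)
    (hbelow : ∀ x, ∃ z ∈ F, z ≤ x) (habove : ∀ x, ∃ z ∈ F, x ≤ z) (hε0 : 0 ≤ ε) (hε1 : ε < 1)
    (hbound : ∀ x, infDist x F ≤ ε * |x|) {c : ℝ} (ha : flF F c ≤ a) (hab : a ≤ b)
    (hb : b ≤ ceF F c) :
    ∫ x in a..b, infDist x F ^ k ≤ 2 / (k + 1) * |c| ^ (k + 1) * (ε / (1 - ε)) ^ (k + 1) := by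
  have hbelow' : (F ∩ Iic c).Nonempty := hbelow c
  have habove' : (F ∩ Ici c).Nonempty := habove c
  refine (intervalIntegral.integral_mono_interval ha hab hb
    (ae_of_all _ fun x => pow_nonneg infDist_nonneg k)
    (intervalIntegrable_infDist_pow F k _ _)).trans ?_
  exact (isGap_flF_ceF hF hbelow' habove').integral_infDist_pow_le_of_mem hε0 hε1 hbound
    ⟨(flF_mem hF hbelow').2, (ceF_mem hF habove').2⟩ k

end DistancePower

theorem integral_infDist_pow_le {F : Set ℝ} (hF : IsClosed F)
    (hbelow : ∀ x, ∃ z ∈ F, z ≤ x) (habove : ∀ x, ∃ z ∈ F, x ≤ z) {ε : ℝ} (hε0 : 0 ≤ ε)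
    (hε1 : ε < 1) (hbound : ∀ x, infDist x F ≤ ε * |x|) {k : ℕ} (hk : 1 ≤ k) {a b : ℝ}
    (hab : a ≤ b) :
    ∫ x in a..b, infDist x F ^ k ≤ ε ^ k / (k + 1) * (∫ x in a..b, |x| ^ k)
      + 2 / (k + 1) * (|a| ^ (k + 1) + |b| ^ (k + 1)) * (ε / (1 - ε)) ^ (k + 1) := by
  obtain ⟨hce_mem, hce_a⟩ := ceF_mem hF (habove a)
  obtain ⟨hfl_mem, hfl_b⟩ := flF_mem hF (hbelow b)
  have hfl_a := (flF_mem hF (hbelow a)).2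
  have hce_b := (ceF_mem hF (habove b)).2
  have hboundary {c u v : ℝ} :=
    integral_infDist_pow_le_of_mem_Icc_flF_ceF (k := k) (c := c) (a := u) (b := v)
      hF hbelow habove hε0 hε1 hbound
  rcases le_or_gt (ceF F a) (flF F b) with hinner | hsame
  · rw [← intervalIntegral.integral_add_adjacent_intervals (intervalIntegrable_infDist_pow F k a _)
      (intervalIntegrable_infDist_pow F k (ceF F a) b),
      ← intervalIntegral.integral_add_adjacent_intervals
        (intervalIntegrable_infDist_pow F k (ceF F a) (flF F b))
        (intervalIntegrable_infDist_pow F k _ b)]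
    have hleft := hboundary hfl_a hce_a le_rfl
    have hright := hboundary le_rfl hfl_b hce_b
    have hmiddle := integral_infDist_pow_le_of_mem hF hε0 hbound hk hce_mem hfl_mem hinner
    have hmono : ∫ x in ceF F a..flF F b, |x| ^ k ≤ ∫ x in a..b, |x| ^ k :=
      intervalIntegral.integral_mono_interval hce_a hinner hfl_b
        (ae_of_all _ fun x => by positivity)
        ((by fun_prop : Continuous fun x : ℝ => |x| ^ k).intervalIntegrable _ _)
    have := mul_le_mul_of_nonneg_left hmono (by positivity : (0 : ℝ) ≤ ε ^ k / (k + 1))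
    linarith
  · have hb : b ≤ ceF F a := by
      by_contra! h
      exact hsame.not_ge (le_flF hce_mem h.le)
    have hI : 0 ≤ ε ^ k / (k + 1) * ∫ x in a..b, |x| ^ k :=
      mul_nonneg (by positivity) (intervalIntegral.integral_nonneg hab fun x _ => by positivity)
    have hBb : 0 ≤ 2 / (k + 1) * |b| ^ (k + 1) * (ε / (1 - ε)) ^ (k + 1) :=
      mul_nonneg (by positivity) (pow_nonneg (div_nonneg hε0 (by linarith)) _)
    linarith [hboundary hfl_a hab hb]

theorem error_int_nearest_mult_general
    (F : Set ℝ) (hF_closed : IsClosed F)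
    (hF_below : ∀ x : ℝ, ∃ z ∈ F, z ≤ x) (hF_above : ∀ x : ℝ, ∃ z ∈ F, x ≤ z)
    (rd : ℝ → ℝ)
    (hrd_near : ∀ x : ℝ, |rd x - x| = min (x - flF F x) (ceF F x - x))
    (ε : ℝ) (hε0 : 0 ≤ ε) (hε1 : ε < 1)
    (hbound : ∀ x : ℝ, |rd x - x| ≤ ε * |x|)
    (k : ℕ) (hk : 1 ≤ k) (a b : ℝ) (hab : a ≤ b) :
    (∫ x in a..b, |rd x - x| ^ k)
      ≤ (ε ^ k / (k + 1)) * (∫ x in a..b, |x| ^ k)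
        + (2 / (k + 1)) * (|a| ^ (k + 1) + |b| ^ (k + 1)) * (ε / (1 - ε)) ^ (k + 1) := by
  have herr : ∀ x, |rd x - x| = infDist x F := fun x => by
    rw [hrd_near, (isGap_flF_ceF hF_closed (hF_below x) (hF_above x)).infDist_eq
      ⟨(flF_mem hF_closed (hF_below x)).2, (ceF_mem hF_closed (hF_above x)).2⟩]
  simp only [herr] at hbound ⊢
  exact integral_infDist_pow_le hF_closed hF_below hF_above hε0 hε1 hbound hk hab

theorem error_int_nearest_mult
    (F : Set ℝ) (hF_closed : IsClosed F) (hF_ne : F.Nonempty)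
    (hF_below : ∀ x : ℝ, ∃ z ∈ F, z ≤ x) (hF_above : ∀ x : ℝ, ∃ z ∈ F, x ≤ z)
    (rd : ℝ → ℝ) (hrd_meas : Measurable rd)
    (hrd_mem : ∀ x : ℝ, rd x = flF F x ∨ rd x = ceF F x)
    (hrd_near : ∀ x : ℝ, |rd x - x| = min (x - flF F x) (ceF F x - x))
    (ε : ℝ) (hε0 : 0 ≤ ε) (hε1 : ε < 1)
    (hbound : ∀ x : ℝ, |rd x - x| ≤ ε * |x|)
    (k : ℕ) (hk : 1 ≤ k) (a b : ℝ) (hab : a ≤ b) :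
    (∫ x in a..b, |rd x - x| ^ k)
      ≤ (ε ^ k / (k + 1)) * (∫ x in a..b, |x| ^ k)
        + (2 / (k + 1)) * (|a| ^ (k + 1) + |b| ^ (k + 1)) * (ε / (1 - ε)) ^ (k + 1) :=
  error_int_nearest_mult_general F hF_closed hF_below hF_above rd hrd_near ε hε0 hε1 hbound k hk a b
    hab
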